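/- arXiv:1709.03430 — 2 statements merged into one kernel-verified Lean document; each statement's English description precedes it below -/
import Mathlib

section
/- For every n ≥ 0, the polynomial a_n ∈ ℚ[g₂,g₃] is weighted-homogeneous of weight n+2 when g₂ is given weight 4 and g₃ weight 6; equivalently, under the ℚ-algebra endomorphism of ℚ[g₂,g₃,t] sending g₂ ↦ t⁴g₂ and g₃ ↦ t⁶g₃, the image of a_n equals t^{n+2}·a_n. -/
/-!
STATEMENT 0: There exists a unique family `(aₙ)` of elements of `ℚ[g₂,g₃]` such that
`℘ := p⁻² + Σ_{n≥0} aₙ pⁿ ∈ ℚ[g₂,g₃]((p))` satisfies `(℘′)² = 4℘³ − g₂℘ − g₃`.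
-/

noncomputable section

/-- The polynomial ring `ℚ[g₂, g₃]`, with `g₂ = X 0` and `g₃ = X 1`. -/
abbrev RQ : Type := MvPolynomial (Fin 2) ℚ

/-- The variable `g₂`. -/
def gTwo : RQ := MvPolynomial.X 0

/-- The variable `g₃`. -/
def gThree : RQ := MvPolynomial.X 1

/-- The derivation `d/dp` on the ring of formal Laurent series `ℚ[g₂,g₃]((p))`. -/
def lsDeriv (f : LaurentSeries RQ) : LaurentSeries RQ where
  coeff n := (n + 1 : ℤ) • f.coeff (n + 1)
  isPWO_support' := by
    have h : Function.support (fun n : ℤ => (n + 1 : ℤ) • f.coeff (n + 1)) ⊆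
        (fun n : ℤ => n - 1) '' f.support := by
      intro n hn
      refine ⟨n + 1, ?_, by ring⟩
      intro h0
      apply hn
      simp only [Function.mem_support, not_not] at *
      rw [h0, smul_zero]
    exact (f.isPWO_support.image_of_monotone
      (fun a b hab => sub_le_sub_right hab 1)).mono h

/-- The formal Laurent series `℘ := p⁻² + Σ_{n≥0} aₙ pⁿ` attached to
a family `(aₙ)` of elements of `ℚ[g₂,g₃]`. -/
def wp (a : ℕ → RQ) : LaurentSeries RQ :=
  HahnSeries.single (-2 : ℤ) (1 : RQ) +
    HahnSeries.ofPowerSeries ℤ RQ (PowerSeries.mk a)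

/-- The inclusion `ℚ[g₂,g₃] → ℚ[g₂,g₃,t]` (with `t = X 2`). -/
def incl3 : MvPolynomial (Fin 2) ℚ →ₐ[ℚ] MvPolynomial (Fin 3) ℚ :=
  MvPolynomial.rename (Fin.castSucc)

/-- The `ℚ`-algebra endomorphism of `ℚ[g₂,g₃,t]` sending `g₂ ↦ t⁴g₂`, `g₃ ↦ t⁶g₃`
and `t ↦ t`. -/
def scaleEndo : MvPolynomial (Fin 3) ℚ →ₐ[ℚ] MvPolynomial (Fin 3) ℚ :=
  MvPolynomial.aeval
    ![(MvPolynomial.X 2) ^ 4 * MvPolynomial.X 0,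
      (MvPolynomial.X 2) ^ 6 * MvPolynomial.X 1,
      MvPolynomial.X 2]

/-!
Writing `℘ = p⁻² + F` turns the differential equation into an equation for the power series
`F = Σ aₙ pⁿ` which has at most one solution over any torsion-free ring. Over `ℚ[g₂,g₃,t]`,
both `F(t⁴g₂, t⁶g₃; p)` and `t² F(g₂, g₃; t p)` solve the equation with parameters
`(t⁴g₂, t⁶g₃)`, so they coincide; comparing coefficients of `pⁿ` gives the claim.
-/

namespace PowerSeries

variable {S : Type*} [CommSemiring S]

theorem rescale_C (t b : S) : rescale t (C b) = C b := by
  ext n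
  rcases n with _ | n <;> simp [coeff_C]

theorem derivative_rescale (t : S) (F : S⟦X⟧) :
    derivative S (rescale t F) = C t * rescale t (derivative S F) := by
  ext n
  simp only [coeff_derivative, coeff_C_mul, coeff_rescale]
  ring

theorem derivative_map {T : Type*} [CommSemiring T] (f : S →+* T) (F : S⟦X⟧) :
    derivative T (map f F) = map f (derivative S F) := by
  ext n
  simp [coeff_derivative]

theorem coeff_X_mul_derivative (F : S⟦X⟧) (n : ℕ) :
    coeff n (X * derivative S F) = n * coeff n F := by
  rcases n with _ | n
  · simp
  · rw [coeff_succ_X_mul, coeff_derivative]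
    push_cast
    ring

theorem coeff_mul_of_coeff_lt_eq_zero {f : S⟦X⟧} (g : S⟦X⟧) {n : ℕ}
    (hf : ∀ m < n, coeff m f = 0) : coeff n (f * g) = coeff n f * constantCoeff g := by
  obtain ⟨f', rfl⟩ := X_pow_dvd_iff.mpr hf
  rw [mul_assoc, coeff_X_pow_mul', if_pos le_rfl, coeff_X_pow_mul', if_pos le_rfl,
    Nat.sub_self, coeff_zero_eq_constantCoeff_apply, coeff_zero_eq_constantCoeff_apply, map_mul]

end PowerSeries

section WeierstrassEquation

open PowerSeries

variable {S : Type*} [CommRing S]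

/-- The equation `℘'² = 4℘³ - b℘ - c` for `℘ = X⁻² + F`, multiplied by `X⁶` using
`X³℘' = X³F' - 2` and `X²℘ = 1 + X²F`. -/
def IsWeierstrassSolution (b c : S) (F : S⟦X⟧) : Prop :=
  (X ^ 3 * derivative S F - 2) ^ 2 =
    4 * (1 + X ^ 2 * F) ^ 3 - C b * X ^ 4 * (1 + X ^ 2 * F) - C c * X ^ 6

namespace IsWeierstrassSolution

variable {b c : S} {F G : S⟦X⟧}

/-- Comparing the coefficients of `Xⁿ` in `X (F - G)' A = (F - G) B`, where `A(0) = -4` and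
`B(0) = 12`, gives `(4n + 12) (F - G)ₙ = 0` once the lower coefficients of `F - G` vanish. -/
theorem unique [IsAddTorsionFree S] (hF : IsWeierstrassSolution b c F)
    (hG : IsWeierstrassSolution b c G) : F = G := by
  unfold IsWeierstrassSolution at hF hG
  set D := F - G
  set A : S⟦X⟧ := X ^ 3 * (derivative S F + derivative S G) - 4
  set B : S⟦X⟧ := 4 * ((1 + X ^ 2 * F) ^ 2 + (1 + X ^ 2 * F) * (1 + X ^ 2 * G)
      + (1 + X ^ 2 * G) ^ 2) - C b * X ^ 4
  have hDAB : X ^ 2 * (X * derivative S D * A) = X ^ 2 * (D * B) := by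
    simp only [D, A, B, map_sub]
    linear_combination hF - hG
  have hcoeff (n : ℕ) : coeff n (X * derivative S D * A) = coeff n (D * B) := by
    simpa only [coeff_X_pow_mul] using congrArg (coeff (n + 2)) hDAB
  have hA : constantCoeff A = -4 := by simp [A, map_ofNat]
  have hB : constantCoeff B = 12 := by norm_num [B, map_ofNat]
  suffices ∀ n, coeff n D = 0 from sub_eq_zero.mp (ext fun n => by simpa [D] using this n)
  intro n
  induction n using Nat.strong_induction_on with
  | _ n ih =>
    have hXD : ∀ m < n, coeff m (X * derivative S D) = 0 := fun m hm => by
      rw [coeff_X_mul_derivative, ih m hm, mul_zero]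
    have h := hcoeff n
    rw [coeff_mul_of_coeff_lt_eq_zero _ hXD, coeff_mul_of_coeff_lt_eq_zero _ ih,
      coeff_X_mul_derivative, hA, hB] at h
    refine nsmul_right_injective (M := S) (n := 4 * n + 12) (by omega) ?_
    simp only [nsmul_eq_mul, smul_zero]
    push_cast
    linear_combination -h

theorem rescale (t : S) (h : IsWeierstrassSolution b c F) :
    IsWeierstrassSolution (t ^ 4 * b) (t ^ 6 * c) (C (t ^ 2) * PowerSeries.rescale t F) := by
  have h' := congrArg (PowerSeries.rescale t) h
  simp only [map_sub, map_add, map_mul, map_pow, map_one, map_ofNat, rescale_X,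
    rescale_C] at h'
  rw [IsWeierstrassSolution, Derivation.leibniz, derivative_C, derivative_rescale]
  simp only [map_mul, map_pow]
  linear_combination h'

theorem map {T : Type*} [CommRing T] (f : S →+* T) (h : IsWeierstrassSolution b c F) :
    IsWeierstrassSolution (f b) (f c) (PowerSeries.map f F) := by
  simpa only [map_sub, map_add, map_mul, map_pow, map_one, map_ofNat, map_X, map_C,
    ← derivative_map, IsWeierstrassSolution] using congrArg (PowerSeries.map f) h

theorem coeff_eq_pow_mul_coeff [IsAddTorsionFree S] {t : S} (hF : IsWeierstrassSolution b c F)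
    (hG : IsWeierstrassSolution (t ^ 4 * b) (t ^ 6 * c) G) (n : ℕ) :
    coeff n G = t ^ (n + 2) * coeff n F := by
  rw [hG.unique (hF.rescale t), coeff_C_mul, coeff_rescale]
  ring

end IsWeierstrassSolution

end WeierstrassEquation

section LaurentDerivative

open PowerSeries

theorem lsDeriv_coeff (f : LaurentSeries RQ) (n : ℤ) :
    (lsDeriv f).coeff n = (n + 1) • f.coeff (n + 1) :=
  rfl

theorem lsDeriv_add (f g : LaurentSeries RQ) : lsDeriv (f + g) = lsDeriv f + lsDeriv g := by
  ext n : 2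
  simp only [lsDeriv_coeff, HahnSeries.coeff_add, smul_add]

theorem lsDeriv_single (m : ℤ) (r : RQ) :
    lsDeriv (HahnSeries.single m r) = HahnSeries.single (m - 1) (m • r) := by
  ext n : 2
  rw [lsDeriv_coeff]
  by_cases h : n = m - 1
  · simp [h]
  · rw [HahnSeries.coeff_single_of_ne (by omega), HahnSeries.coeff_single_of_ne h, smul_zero]

theorem lsDeriv_coe (f : RQ⟦X⟧) :
    lsDeriv (f : LaurentSeries RQ) = (derivative RQ f : LaurentSeries RQ) := by
  ext n : 2
  rw [lsDeriv_coeff, PowerSeries.coeff_coe, PowerSeries.coeff_coe]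
  split_ifs with h₁ h₂ h₂
  · exact smul_zero _
  · omega
  · obtain rfl : n = -1 := by omega
    simp
  · lift n to ℕ using not_lt.mp h₂
    rw [coeff_derivative, zsmul_eq_mul, show ((n : ℤ) + 1).natAbs = n + 1 by omega,
      Int.natAbs_natCast]
    push_cast
    ring

end LaurentDerivative

open PowerSeries in
theorem isWeierstrassSolution_mk (a : ℕ → RQ)
    (ha : (lsDeriv (wp a)) ^ 2 =
      4 * (wp a) ^ 3 - (HahnSeries.C gTwo : LaurentSeries RQ) * wp a -
        (HahnSeries.C gThree : LaurentSeries RQ)) :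
    IsWeierstrassSolution gTwo gThree (mk a) := by
  apply HahnSeries.ofPowerSeries_injective (Γ := ℤ) (R := RQ)
  simp only [map_sub, map_add, map_mul, map_pow, map_one, map_ofNat, HahnSeries.ofPowerSeries_C]
  set p : LaurentSeries RQ := HahnSeries.ofPowerSeries ℤ RQ X
  have hp (k : ℕ) : p ^ k = HahnSeries.single (k : ℤ) 1 := by
    rw [← map_pow, HahnSeries.ofPowerSeries_X_pow]
  have hwp : p ^ 2 * wp a = 1 + p ^ 2 * (mk a : LaurentSeries RQ) := by
    rw [wp, mul_add, hp, HahnSeries.single_mul_single]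
    simp
  have hderiv : p ^ 3 * lsDeriv (wp a) =
      p ^ 3 * (derivative RQ (mk a) : LaurentSeries RQ) - 2 := by
    rw [wp, lsDeriv_add, lsDeriv_single, lsDeriv_coe, mul_add, hp,
      HahnSeries.single_mul_single]
    simp [HahnSeries.single_zero_ofNat, sub_eq_neg_add]
  rw [← hwp, ← hderiv]
  linear_combination p ^ 6 * ha

/-- each `aₙ` is weighted-homogeneous of weight `n+2` for the weights
`wt g₂ = 4`, `wt g₃ = 6`: the endomorphism `g₂ ↦ t⁴g₂, g₃ ↦ t⁶g₃` of `ℚ[g₂,g₃,t]`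
sends (the image of) `aₙ` to `t^{n+2}·aₙ`. -/
theorem statement2 (a : ℕ → RQ)
    (ha : (lsDeriv (wp a)) ^ 2 =
      4 * (wp a) ^ 3 - (HahnSeries.C gTwo : LaurentSeries RQ) * wp a -
        (HahnSeries.C gThree : LaurentSeries RQ)) :
    ∀ n : ℕ,
      scaleEndo (incl3 (a n)) = (MvPolynomial.X 2) ^ (n + 2) * incl3 (a n) := by
  intro n
  have hsol := isWeierstrassSolution_mk a ha
  have hscaled := hsol.map (scaleEndo.comp incl3).toRingHom
  have hscale_g : (scaleEndo.comp incl3) gTwo = MvPolynomial.X 2 ^ 4 * incl3 gTwo ∧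
      (scaleEndo.comp incl3) gThree = MvPolynomial.X 2 ^ 6 * incl3 gThree := by
    simp [scaleEndo, incl3, gTwo, gThree]
  rw [AlgHom.toRingHom_eq_coe, RingHom.coe_coe, hscale_g.1, hscale_g.2] at hscaled
  simpa using (hsol.map incl3.toRingHom).coeff_eq_pow_mul_coeff hscaled n
end
end

section
/- In 𝔱_{1,n}, for any four pairwise distinct indices i, j, k, l in {1,…,n}, one has [t_{ij}, t_{kl}] = 0; more generally, for all α, β ≥ 0, [(ad x_i)^α(t_{ij}), (ad x_k)^β(t_{kl})] = 0. -/
/-! The elliptic braid Lie algebra `𝔱_{1,n}` presented by generators and relations. -/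

noncomputable section

/-- Generators of `𝔱_{1,n}`: `x i`, `y i` for `i ∈ [n]` and `t i j` for `i ≠ j`. -/
inductive TGen (n : ℕ) : Type
  | x : Fin n → TGen n
  | y : Fin n → TGen n
  | t : (i j : Fin n) → i ≠ j → TGen n

variable (k : Type) [Field k] [CharZero k] (n : ℕ)

/-- The free Lie algebra on the generators of `𝔱_{1,n}`. -/
abbrev FT : Type := FreeLieAlgebra k (TGen n)

/-- The generator `x i` in the free Lie algebra. -/
def fx (i : Fin n) : FT k n := FreeLieAlgebra.of k (TGen.x i)

/-- The generator `y i` in the free Lie algebra. -/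
def fy (i : Fin n) : FT k n := FreeLieAlgebra.of k (TGen.y i)

/-- The generator `t i j` (for `i ≠ j`) in the free Lie algebra. -/
def ft (i j : Fin n) (h : i ≠ j) : FT k n := FreeLieAlgebra.of k (TGen.t i j h)

/-- The defining relations of `𝔱_{1,n}`. -/
inductive TRel : FT k n → Prop
  | xx (i j : Fin n) : TRel ⁅fx k n i, fx k n j⁆
  | yy (i j : Fin n) : TRel ⁅fy k n i, fy k n j⁆
  | xy (i j : Fin n) (h : i ≠ j) : TRel (⁅fx k n i, fy k n j⁆ - ft k n i j h)
  | xyDiag (i : Fin n) :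
      TRel (⁅fx k n i, fy k n i⁆ + ∑ j : Fin n, if h : i ≠ j then ft k n i j h else 0)
  | xt (i j l : Fin n) (h : i ≠ j) (h1 : l ≠ i) (h2 : l ≠ j) :
      TRel ⁅fx k n l, ft k n i j h⁆
  | yt (i j l : Fin n) (h : i ≠ j) (h1 : l ≠ i) (h2 : l ≠ j) :
      TRel ⁅fy k n l, ft k n i j h⁆
  | xxt (i j : Fin n) (h : i ≠ j) : TRel ⁅fx k n i + fx k n j, ft k n i j h⁆
  | yyt (i j : Fin n) (h : i ≠ j) : TRel ⁅fy k n i + fy k n j, ft k n i j h⁆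
  | tsymm (i j : Fin n) (h : i ≠ j) : TRel (ft k n i j h - ft k n j i h.symm)

/-- The Lie ideal of relations of `𝔱_{1,n}`. -/
abbrev tIdeal : LieIdeal k (FT k n) :=
  LieSubmodule.lieSpan k (FT k n) {a | TRel k n a}

/-- The Lie algebra `𝔱_{1,n}`. -/
abbrev T1 : Type := FT k n ⧸ tIdeal k n

/-- The generator `x i` of `𝔱_{1,n}`. -/
def tx (i : Fin n) : T1 k n := LieSubmodule.Quotient.mk (N := tIdeal k n) (fx k n i)

/-- The generator `y i` of `𝔱_{1,n}`. -/
def ty (i : Fin n) : T1 k n := LieSubmodule.Quotient.mk (N := tIdeal k n) (fy k n i)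

/-- The generator `t i j` (for `i ≠ j`) of `𝔱_{1,n}`. -/
def tt (i j : Fin n) (h : i ≠ j) : T1 k n :=
  LieSubmodule.Quotient.mk (N := tIdeal k n) (ft k n i j h)

/-- The adjoint operator `ad x : 𝔱_{1,n} → 𝔱_{1,n}`. -/
def adT (v : T1 k n) : Module.End k (T1 k n) := LieAlgebra.ad k (T1 k n) v

/-!
The centralizer of an element is a Lie subalgebra, hence stable under `ad x_i`. Both `x_l` and
`t_lm` commute with `x_i` and with `t_ij = [x_i, y_j]`, so they commute with
`u = (ad x_i)^α t_ij`; thus `x_l` and `t_lm` lie in the centralizer of `u`, and so does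
`(ad x_l)^β t_lm`.
-/

section LieRing

variable {R L : Type*} [CommRing R] [LieRing L] [LieAlgebra R L]

theorem lie_eq_zero_comm {x y : L} : ⁅x, y⁆ = 0 ↔ ⁅y, x⁆ = 0 := by
  rw [← lie_skew, neg_eq_zero]

theorem lie_lie_eq_zero_of_lie_eq_zero {a x y : L} (hx : ⁅a, x⁆ = 0) (hy : ⁅a, y⁆ = 0) :
    ⁅a, ⁅x, y⁆⁆ = 0 := by
  rw [leibniz_lie, hx, hy, zero_lie, lie_zero, add_zero]

theorem lie_ad_pow_apply_eq_zero {a x y : L} (hx : ⁅a, x⁆ = 0) (hy : ⁅a, y⁆ = 0) (α : ℕ) :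
    ⁅a, (LieAlgebra.ad R L x ^ α) y⁆ = 0 := by
  induction α with
  | zero => simpa using hy
  | succ α ih =>
    rw [pow_succ', Module.End.mul_apply, LieAlgebra.ad_apply]
    exact lie_lie_eq_zero_of_lie_eq_zero hx ih

end LieRing

omit [CharZero k] in
theorem mk_eq_zero_of_rel {a : FT k n} (h : TRel k n a) :
    LieSubmodule.Quotient.mk (N := tIdeal k n) a = 0 :=
  LieSubmodule.Quotient.mk_eq_zero'.mpr (LieSubmodule.subset_lieSpan h)

omit [CharZero k] in
theorem tx_lie_tx (i j : Fin n) : ⁅tx k n i, tx k n j⁆ = 0 :=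
  mk_eq_zero_of_rel k n (TRel.xx i j)

omit [CharZero k] in
theorem tx_lie_tt {i j l : Fin n} (hij : i ≠ j) (hli : l ≠ i) (hlj : l ≠ j) :
    ⁅tx k n l, tt k n i j hij⁆ = 0 :=
  mk_eq_zero_of_rel k n (TRel.xt i j l hij hli hlj)

omit [CharZero k] in
theorem ty_lie_tt {i j l : Fin n} (hij : i ≠ j) (hli : l ≠ i) (hlj : l ≠ j) :
    ⁅ty k n l, tt k n i j hij⁆ = 0 :=
  mk_eq_zero_of_rel k n (TRel.yt i j l hij hli hlj)

omit [CharZero k] in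
theorem tt_eq_lie_tx_ty {i j : Fin n} (hij : i ≠ j) : tt k n i j hij = ⁅tx k n i, ty k n j⁆ :=
  (sub_eq_zero.mp (mk_eq_zero_of_rel k n (TRel.xy i j hij))).symm

omit [CharZero k] in
theorem tt_lie_tt {i j l m : Fin n} (hij : i ≠ j) (hlm : l ≠ m) (hil : i ≠ l) (him : i ≠ m)
    (hjl : j ≠ l) (hjm : j ≠ m) : ⁅tt k n i j hij, tt k n l m hlm⁆ = 0 := by
  rw [tt_eq_lie_tx_ty k n hlm]
  exact lie_lie_eq_zero_of_lie_eq_zero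
    (lie_eq_zero_comm.mp (tx_lie_tt k n hij hil.symm hjl.symm))
    (lie_eq_zero_comm.mp (ty_lie_tt k n hij him.symm hjm.symm))

/-- in `𝔱_{1,n}`, for pairwise distinct `i, j, l, m`, one has
`[t_{ij}, t_{lm}] = 0`, and more generally
`[(ad x_i)^α(t_{ij}), (ad x_l)^β(t_{lm})] = 0` for all `α, β ≥ 0`. -/
theorem statement14 (i j l m : Fin n)
    (hij : i ≠ j) (hlm : l ≠ m) (hil : i ≠ l) (him : i ≠ m) (hjl : j ≠ l)
    (hjm : j ≠ m) :
    ⁅tt k n i j hij, tt k n l m hlm⁆ = 0 ∧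
    ∀ α β : ℕ,
      ⁅((adT k n (tx k n i)) ^ α) (tt k n i j hij),
        ((adT k n (tx k n l)) ^ β) (tt k n l m hlm)⁆ = 0 := by
  refine ⟨tt_lie_tt k n hij hlm hil him hjl hjm, fun α β => ?_⟩
  set u := ((adT k n (tx k n i)) ^ α) (tt k n i j hij)
  have hxu : ⁅tx k n l, u⁆ = 0 :=
    lie_ad_pow_apply_eq_zero (tx_lie_tx k n l i) (tx_lie_tt k n hij hil.symm hjl.symm) α
  have htu : ⁅tt k n l m hlm, u⁆ = 0 :=
    lie_ad_pow_apply_eq_zero (lie_eq_zero_comm.mp (tx_lie_tt k n hlm hil him))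
      (tt_lie_tt k n hlm hij hil.symm hjl.symm him.symm hjm.symm) α
  exact lie_ad_pow_apply_eq_zero (lie_eq_zero_comm.mp hxu) (lie_eq_zero_comm.mp htu) β
end
end
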